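/- Suppose b ∈ A(ri(dom(∑_{i=1}^s f_i))), where ri denotes the relative interior. If x = (x_1,…,x_s) is a solution of problem (P), then for any β > 0 and any α_i > 0 (i = 1,…,s) there exists y ∈ ℝ^m such that x_i = prox_{(α_i/β)f_i}(x_i − (α_i/β)A_iᵀ y) for every i ∈ {1,…,s} and y = prox_{β ι_C*}(y + β ∑_{i=1}^s A_i x_i). -/

import Mathlib

open Matrix Filter Topology

noncomputable section

/-- Spectral norm (largest singular value) of a real matrix. -/
def specNorm {p q : Type*} [Fintype p] [Fintype q] [DecidableEq q]
    (M : Matrix p q ℝ) : ℝ :=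
  ‖LinearMap.toContinuousLinearMap (Matrix.toEuclideanLin M)‖

/-- Condition-M for a triple of matrices: `M0 = M1 + M2`, `H := M0 + M2` is symmetric
positive definite, and `‖H^{-1/2} M2 H^{-1/2}‖₂ < 1/2` (here `H^{-1/2}` is the positive
semidefinite square root of `H⁻¹`). -/
def ConditionM {d : Type*} [Fintype d] [DecidableEq d] (M0 M1 M2 : Matrix d d ℝ) : Prop :=
  M0 = M1 + M2 ∧ ∃ hH : (M0 + M2).PosDef,
    specNorm (((hH.inv.posSemidef.1.eigenvectorUnitary : Matrix d d ℝ) *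
        diagonal (fun i => Real.sqrt (hH.inv.posSemidef.1.eigenvalues i)) *
        (star hH.inv.posSemidef.1.eigenvectorUnitary : Matrix d d ℝ)) * M2 *
      ((hH.inv.posSemidef.1.eigenvectorUnitary : Matrix d d ℝ) *
        diagonal (fun i => Real.sqrt (hH.inv.posSemidef.1.eigenvalues i)) *
        (star hH.inv.posSemidef.1.eigenvectorUnitary : Matrix d d ℝ))) < 1 / 2

/-- The cost functional defining the proximity operator `prox_{φ,H}` at input `x`. -/
def proxCost {ι : Type*} [Fintype ι] (φ : (ι → ℝ) → EReal) (H : Matrix ι ι ℝ)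
    (x u : ι → ℝ) : EReal :=
  ((((1 : ℝ) / 2) * ((u - x) ⬝ᵥ H.mulVec (u - x)) : ℝ) : EReal) + φ u

/-- `p = prox_{φ,H}(x)`: `p` is the unique minimizer of the prox cost. -/
def IsProx {ι : Type*} [Fintype ι] (φ : (ι → ℝ) → EReal) (H : Matrix ι ι ℝ)
    (x p : ι → ℝ) : Prop :=
  (∀ u, proxCost φ H x p ≤ proxCost φ H x u) ∧
  ∀ q, (∀ u, proxCost φ H x q ≤ proxCost φ H x u) → q = p

/-- Proper lower semicontinuous convex extended-real-valued function. -/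
def ProperConvexLsc {ι : Type*} [Fintype ι] (f : (ι → ℝ) → EReal) : Prop :=
  (∃ x, f x ≠ ⊤) ∧ (∀ x, f x ≠ ⊥) ∧ LowerSemicontinuous f ∧
  ∀ x y : ι → ℝ, ∀ t : ℝ, 0 < t → t < 1 →
    f (t • x + (1 - t) • y) ≤ (t : EReal) * f x + ((1 - t : ℝ) : EReal) * f y

/-- Scaling of an extended-real-valued function by a real constant. -/
def smulF {V : Type*} (c : ℝ) (φ : V → EReal) : V → EReal := fun u => (c : EReal) * φ u

/-- The conjugate of the indicator of `C = {b}`: `ι_C*(y) = ⟨y, b⟩`. -/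
def iotaCstar {m : ℕ} (b : Fin m → ℝ) : (Fin m → ℝ) → EReal :=
  fun y => ((y ⬝ᵥ b : ℝ) : EReal)

variable {s m : ℕ} {n : Fin s → ℕ}

/-- Index type for the concatenated variable `x = (x_1, …, x_s)`. -/
abbrev XIdx (n : Fin s → ℕ) := (i : Fin s) × Fin (n i)

/-- Index type for the full variable `v = (x, y)`. -/
abbrev FIdx (n : Fin s → ℕ) (m : ℕ) := XIdx n ⊕ Fin m

/-- The `i`-th block of a concatenated vector. -/
def blk (x : XIdx n → ℝ) (i : Fin s) : Fin (n i) → ℝ := fun j => x ⟨i, j⟩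

/-- The matrix `A = [A_1 … A_s]`. -/
def bigA (A : ∀ i : Fin s, Matrix (Fin m) (Fin (n i)) ℝ) : Matrix (Fin m) (XIdx n) ℝ :=
  Matrix.of fun r p => A p.1 r p.2

/-- The separable objective `∑ f_i(x_i)`. -/
def objSum (f : ∀ i : Fin s, (Fin (n i) → ℝ) → EReal) (x : XIdx n → ℝ) : EReal :=
  ∑ i, f i (blk x i)

/-- `∑ A_i x_i`. -/
def sumAx (A : ∀ i : Fin s, Matrix (Fin m) (Fin (n i)) ℝ) (x : XIdx n → ℝ) : Fin m → ℝ :=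
  ∑ i, (A i).mulVec (blk x i)

/-- `x` is a solution of problem (P). -/
def IsSolution (f : ∀ i : Fin s, (Fin (n i) → ℝ) → EReal)
    (A : ∀ i : Fin s, Matrix (Fin m) (Fin (n i)) ℝ) (b : Fin m → ℝ)
    (x : XIdx n → ℝ) : Prop :=
  sumAx A x = b ∧ ∀ z : XIdx n → ℝ, sumAx A z = b → objSum f x ≤ objSum f z

/-- `b ∈ A(ri(dom(∑ f_i)))` where `ri` is the relative (intrinsic) interior. -/
def RiCond (f : ∀ i : Fin s, (Fin (n i) → ℝ) → EReal)
    (A : ∀ i : Fin s, Matrix (Fin m) (Fin (n i)) ℝ) (b : Fin m → ℝ) : Prop :=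
  b ∈ (fun x => sumAx A x) '' intrinsicInterior ℝ {x : XIdx n → ℝ | objSum f x ≠ ⊤}

/-- The `x`-part of a full vector. -/
def xpart (v : FIdx n m → ℝ) : XIdx n → ℝ := fun p => v (Sum.inl p)

/-- The `y`-part of a full vector. -/
def ypart (v : FIdx n m → ℝ) : Fin m → ℝ := fun r => v (Sum.inr r)

/-- The function `Φ(x_1,…,x_s,y) = ∑ f_i(x_i) + ι_C*(y)`. -/
def PhiFun (f : ∀ i : Fin s, (Fin (n i) → ℝ) → EReal) (b : Fin m → ℝ)
    (v : FIdx n m → ℝ) : EReal :=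
  objSum f (xpart v) + iotaCstar b (ypart v)

/-- The diagonal matrix `R = diag((β/α_1)I, …, (β/α_s)I, (1/β)I)`. -/
def Rmat (α : Fin s → ℝ) (β : ℝ) : Matrix (FIdx n m) (FIdx n m) ℝ :=
  Matrix.diagonal (Sum.elim (fun p : XIdx n => β / α p.1) fun _ => 1 / β)

/-- The inverse `R⁻¹` of the diagonal matrix `R`. -/
def Rinv (α : Fin s → ℝ) (β : ℝ) : Matrix (FIdx n m) (FIdx n m) ℝ :=
  Matrix.diagonal (Sum.elim (fun p : XIdx n => α p.1 / β) fun _ => β)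

/-- The expansive matrix `E = [[I, −P⁻¹Aᵀ],[βA, I]]`. -/
def Emat (A : ∀ i : Fin s, Matrix (Fin m) (Fin (n i)) ℝ) (α : Fin s → ℝ) (β : ℝ) :
    Matrix (FIdx n m) (FIdx n m) ℝ :=
  Matrix.fromBlocks 1 (-(Matrix.diagonal (fun p : XIdx n => α p.1 / β) * (bigA A)ᵀ))
    (β • bigA A) 1

/-- The skew-symmetric matrix `S_A = [[0, −Aᵀ],[A, 0]]`. -/
def SAmat (A : ∀ i : Fin s, Matrix (Fin m) (Fin (n i)) ℝ) :
    Matrix (FIdx n m) (FIdx n m) ℝ :=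
  Matrix.fromBlocks 0 (-(bigA A)ᵀ) (bigA A) 0

/-- `w = 𝒯(v)`, where `𝒯(x_1,…,x_s,y) = (prox_{(α_1/β)f_1}x_1, …, prox_{(α_s/β)f_s}x_s,
prox_{β ι_C*}y)`. -/
def isT (f : ∀ i : Fin s, (Fin (n i) → ℝ) → EReal) (b : Fin m → ℝ)
    (α : Fin s → ℝ) (β : ℝ) (v w : FIdx n m → ℝ) : Prop :=
  (∀ i, IsProx (smulF (α i / β) (f i)) 1 (blk (xpart v) i) (blk (xpart w) i)) ∧
  IsProx (smulF β (iotaCstar b)) 1 (ypart v) (ypart w)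

/-- `w = T_ℳ(u₁, u₂)`, i.e. `w = 𝒯((E − R⁻¹M₀)w + R⁻¹M₁u₁ + R⁻¹M₂u₂)`. -/
def isTM (f : ∀ i : Fin s, (Fin (n i) → ℝ) → EReal)
    (A : ∀ i : Fin s, Matrix (Fin m) (Fin (n i)) ℝ) (b : Fin m → ℝ)
    (α : Fin s → ℝ) (β : ℝ) (M0 M1 M2 : Matrix (FIdx n m) (FIdx n m) ℝ)
    (u1 u2 w : FIdx n m → ℝ) : Prop :=
  isT f b α β ((Emat A α β - Rinv α β * M0).mulVec w + (Rinv α β * M1).mulVec u1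
    + (Rinv α β * M2).mulVec u2) w

/-- `T_ℳ` is well-defined. -/
def TMWellDefined (f : ∀ i : Fin s, (Fin (n i) → ℝ) → EReal)
    (A : ∀ i : Fin s, Matrix (Fin m) (Fin (n i)) ℝ) (b : Fin m → ℝ)
    (α : Fin s → ℝ) (β : ℝ) (M0 M1 M2 : Matrix (FIdx n m) (FIdx n m) ℝ) : Prop :=
  ∀ u1 u2 : FIdx n m → ℝ, ∃! w, isTM f A b α β M0 M1 M2 u1 u2 w



/-!
The relative interior condition is a constraint qualification. Properly separating the point
`(b, ∑ fᵢ(xᵢ))` from the convex set `{(∑ Aᵢuᵢ, t) | t > ∑ fᵢ(uᵢ)}` gives a functional whose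
vertical component is positive, because `b = ∑ Aᵢx⁰ᵢ` with `x⁰` in the relative interior of the
domain; normalising it yields a multiplier `y` with
`∑ fᵢ(xᵢ) ≤ ∑ fᵢ(uᵢ) + ⟨y, ∑ Aᵢuᵢ - b⟩` for all `u`. Varying one block at a time shows that
`-Aᵢᵀy` is a subgradient of `fᵢ` at `xᵢ`, and `b` is the gradient of the linear function `ι_C*`.
Finally `w ∈ ∂φ(p)` implies `p = prox_{tφ}(p + t w)`, since the prox cost then grows
quadratically away from `p`.
-/

section Separation

variable {E : Type*} [NormedAddCommGroup E] [NormedSpace ℝ E] [FiniteDimensional ℝ E]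

theorem exists_proper_separation_zero_of_span_eq_top {K : Set E} (hK : Convex ℝ K)
    (hne : K.Nonempty) (hspan : Submodule.span ℝ K = ⊤) (h0 : (0 : E) ∉ K) :
    ∃ f : E →L[ℝ] ℝ, (∀ k ∈ K, 0 ≤ f k) ∧ ∃ k ∈ K, 0 < f k := by
  by_cases h0K : (0 : E) ∈ affineSpan ℝ K
  · have htop : affineSpan ℝ K = ⊤ := by
      rw [← AffineSubspace.direction_eq_top_iff_of_nonempty ((affineSpan_nonempty ℝ).2 hne),
        eq_top_iff, ← hspan, Submodule.span_le]
      intro k hk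
      simpa using AffineSubspace.vsub_mem_direction (subset_affineSpan ℝ K hk) h0K
    have hint := hK.interior_nonempty_iff_affineSpan_eq_top.2 htop
    obtain ⟨f, hf⟩ := geometric_hahn_banach_open_point hK.interior isOpen_interior
      fun h => h0 (interior_subset h)
    have hpos : ∀ z ∈ interior K, 0 < (-f) z := fun z hz => by simpa using hf z hz
    -- `K` lies in the closure of its interior, where `-f` is nonnegative
    refine ⟨-f, fun k hk => ?_, ?_⟩
    · have hcl : closure (interior K) ⊆ {z | 0 ≤ (-f) z} :=
        (isClosed_le continuous_const (-f).continuous).closure_subset_iff.2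
          fun z hz => (hpos z hz).le
      exact hcl (hK.closure_interior_eq_closure_of_nonempty_interior hint ▸ subset_closure hk)
    · obtain ⟨z, hz⟩ := hint
      exact ⟨z, interior_subset hz, hpos z hz⟩
  · obtain ⟨f, u, hf0, hfu⟩ := geometric_hahn_banach_point_closed (affineSpan ℝ K).convex
      (affineSpan ℝ K).closed_of_finiteDimensional h0K
    have hpos : ∀ k ∈ K, 0 < f k := fun k hk => by
      linarith [map_zero f, hfu k (subset_affineSpan ℝ K hk)]
    exact ⟨f, fun k hk => (hpos k hk).le, hne.some, hne.some_mem, hpos _ hne.some_mem⟩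

theorem exists_proper_separation {K : Set E} (hK : Convex ℝ K) (hne : K.Nonempty) {a : E}
    (ha : a ∉ K) : ∃ f : E →L[ℝ] ℝ, (∀ k ∈ K, f a ≤ f k) ∧ ∃ k ∈ K, f a < f k := by
  set K' : Set E := (fun z => a + z) ⁻¹' K
  set V := Submodule.span ℝ K'
  have hK' : ∀ k ∈ K, k - a ∈ K' := fun k hk => by simpa [K'] using hk
  obtain ⟨f, hf, k, hk, hfk⟩ := exists_proper_separation_zero_of_span_eq_top
    ((hK.translate_preimage_right a).linear_preimage V.subtype)
    (by obtain ⟨k, hk⟩ := hne; exact ⟨⟨k - a, Submodule.subset_span (hK' k hk)⟩, hK' k hk⟩)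
    Submodule.span_span_coe_preimage (by simpa [K'] using ha)
  obtain ⟨g, hg, -⟩ := exists_extension_norm_eq V f
  refine ⟨g, fun k hk => ?_, a + k, hk, ?_⟩
  · have hgk := hg ⟨k - a, Submodule.subset_span (hK' k hk)⟩
    have hfk := hf ⟨k - a, Submodule.subset_span (hK' k hk)⟩ (hK' k hk)
    rw [← hgk, map_sub, sub_nonneg] at hfk
    exact hfk
  · simpa [hg k] using hfk

end Separation

theorem exists_add_smul_sub_mem_of_mem_intrinsicInterior {E : Type*} [NormedAddCommGroup E]
    [NormedSpace ℝ E] {D : Set E} {x₀ u : E} (hx₀ : x₀ ∈ intrinsicInterior ℝ D)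
    (hu : u ∈ affineSpan ℝ D) : ∃ ε : ℝ, 0 < ε ∧ x₀ + ε • (x₀ - u) ∈ D := by
  obtain ⟨z, hz, rfl⟩ := hx₀
  have hmem : ∀ t : ℝ, (z : E) + t • (z - u) ∈ affineSpan ℝ D := fun t => by
    simpa [vadd_eq_add, add_comm] using AffineSubspace.vadd_mem_of_mem_direction
      (Submodule.smul_mem _ t (AffineSubspace.vsub_mem_direction z.2 hu)) z.2
  let c : ℝ → affineSpan ℝ D := fun t => ⟨z + t • (z - u), hmem t⟩
  have hc : ContinuousAt c 0 := (by fun_prop : Continuous fun t : ℝ => (z : E) + t • (z - u))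
    |>.subtype_mk hmem |>.continuousAt
  have hc0 : c 0 = z := by ext; simp [c]
  have hev : ∀ᶠ t in 𝓝[>] 0, c t ∈ interior ((↑) ⁻¹' D) :=
    nhdsWithin_le_nhds (hc.preimage_mem_nhds (hc0 ▸ isOpen_interior.mem_nhds hz))
  obtain ⟨ε, hεD, hε⟩ := (hev.and self_mem_nhdsWithin).exists
  exact ⟨ε, hε, interior_subset (s := ((↑) : affineSpan ℝ D → E) ⁻¹' D) hεD⟩

theorem ConvexOn.convex_strictEpigraph {E : Type*} [AddCommGroup E] [Module ℝ E]
    {D : Set E} {g : E → ℝ} (hg : ConvexOn ℝ D g) :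
    Convex ℝ {p : E × ℝ | p.1 ∈ D ∧ g p.1 < p.2} := by
  rintro ⟨u, s⟩ ⟨hu, hs⟩ ⟨v, t⟩ ⟨hv, ht⟩ a c ha hc hac
  refine ⟨hg.1 hu hv ha hc hac, (hg.2 hu hv ha hc hac).trans_lt ?_⟩
  rcases ha.eq_or_lt with rfl | ha
  · simp_all
  · exact add_lt_add_of_lt_of_le (mul_lt_mul_of_pos_left hs ha)
      (mul_le_mul_of_nonneg_left ht.le hc)

theorem ConvexOn.exists_lagrange_multiplier {E F : Type*} [NormedAddCommGroup E]
    [NormedSpace ℝ E] [NormedAddCommGroup F] [NormedSpace ℝ F] [FiniteDimensional ℝ F]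
    {D : Set E} {g : E → ℝ} (hg : ConvexOn ℝ D g) (L : E →ₗ[ℝ] F) {b : F}
    (hb : b ∈ L '' intrinsicInterior ℝ D) {x : E} (hx : x ∈ D) (hLx : L x = b)
    (hmin : ∀ u ∈ D, L u = b → g x ≤ g u) :
    ∃ φ : F →L[ℝ] ℝ, ∀ u ∈ D, g x ≤ g u + φ (L u - b) := by
  obtain ⟨x₀, hx₀, hLx₀⟩ := hb
  set K := L.prodMap LinearMap.id '' {p : E × ℝ | p.1 ∈ D ∧ g p.1 < p.2}
  have hbK : (b, g x) ∉ K := by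
    rintro ⟨⟨u, t⟩, ⟨hu, hut⟩, h⟩
    simp only [LinearMap.prodMap_apply, LinearMap.id_coe, id_eq, Prod.mk.injEq] at h
    linarith [hmin u hu h.1]
  obtain ⟨Φ, hΦ, -, ⟨⟨u₁, t₁⟩, ⟨hu₁, -⟩, rfl⟩, hΦ₁⟩ :=
    exists_proper_separation (hg.convex_strictEpigraph.linear_image _)
      ⟨_, (x, g x + 1), ⟨hx, lt_add_one _⟩, rfl⟩ hbK
  set ψ := Φ.comp (ContinuousLinearMap.inl ℝ F ℝ)
  set γ := Φ (0, 1)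
  have hΦ_apply : ∀ z t, Φ (z, t) = ψ z + t * γ := fun z t => by
    have : (z, t) = (z, 0) + t • ((0 : F), (1 : ℝ)) := by ext <;> simp
    rw [this, map_add, map_smul, smul_eq_mul]
    rfl
  have key : ∀ u ∈ D, ∀ t, g u < t → ψ b + g x * γ ≤ ψ (L u) + t * γ := fun u hu t ht => by
    simpa [hΦ_apply] using hΦ _ ⟨(u, t), ⟨hu, ht⟩, rfl⟩
  have hγ : 0 < γ := by
    have hγ0 : 0 ≤ γ := by nlinarith [hLx ▸ key x hx (g x + 1) (lt_add_one _)]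
    refine hγ0.lt_of_ne' fun hγ0 => ?_
    have hψ₁ : ψ b < ψ (L u₁) := by simpa [hΦ_apply, hγ0] using hΦ₁
    -- moving past `x₀` away from `u₁` stays in `D` but lowers `ψ ∘ L` below `ψ b`
    obtain ⟨ε, hε, hmem⟩ :=
      exists_add_smul_sub_mem_of_mem_intrinsicInterior hx₀ (subset_affineSpan ℝ D hu₁)
    have := key _ hmem _ (lt_add_one _)
    simp only [hγ0, mul_zero, add_zero, map_add, map_smul, map_sub, hLx₀, smul_eq_mul] at this
    nlinarith
  refine ⟨γ⁻¹ • ψ, fun u hu => ?_⟩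
  have hle : ψ b + g x * γ ≤ ψ (L u) + g u * γ := le_of_forall_pos_le_add fun δ hδ => by
    have := key u hu (g u + δ / γ) (by linarith [div_pos hδ hγ])
    rwa [add_mul, div_mul_cancel₀ _ hγ.ne', ← add_assoc] at this
  simp only [FunLike.coe_smul, Pi.smul_apply, map_sub, smul_eq_mul]
  linarith [(le_inv_mul_iff₀ hγ).2 (show γ * (g x - g u) ≤ ψ (L u) - ψ b by linarith)]

theorem dotProduct_self_nonneg {R ι : Type*} [Fintype ι] [Ring R] [LinearOrder R]
    [IsStrictOrderedRing R] (v : ι → R) : 0 ≤ v ⬝ᵥ v :=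
  Fintype.sum_nonneg fun i => mul_self_nonneg (v i)

section Prox

variable {ι : Type*} [Fintype ι] [DecidableEq ι]

theorem isProx_of_quadratic_growth {φ : (ι → ℝ) → EReal} {x p : ι → ℝ} {C : ℝ}
    (hp : proxCost φ 1 x p = C)
    (h : ∀ u, (((C + 1 / 2 * ((u - p) ⬝ᵥ (u - p))) : ℝ) : EReal) ≤ proxCost φ 1 x u) :
    IsProx φ 1 x p := by
  refine ⟨fun u => hp ▸ le_trans ?_ (h u), fun q hq => ?_⟩
  · exact EReal.coe_le_coe_iff.2
      (le_add_of_nonneg_right (by linarith [dotProduct_self_nonneg (u - p)]))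
  · have := (h q).trans (hp ▸ hq p)
    rw [EReal.coe_le_coe_iff, add_le_iff_nonpos_right] at this
    have hq0 : (q - p) ⬝ᵥ (q - p) = 0 := by linarith [dotProduct_self_nonneg (q - p)]
    exact sub_eq_zero.1 (dotProduct_self_eq_zero.1 hq0)

theorem isProx_add_smul_of_subgradient {φ : (ι → ℝ) → EReal} {t : ℝ} (ht : 0 < t)
    {p w : ι → ℝ} {c : ℝ} (hp : φ p = c) (hw : ∀ v, ((c + w ⬝ᵥ (v - p) : ℝ) : EReal) ≤ φ v) :
    IsProx (smulF t φ) 1 (p + t • w) p := by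
  have hsq : ∀ u, (u - (p + t • w)) ⬝ᵥ (u - (p + t • w))
      = (u - p) ⬝ᵥ (u - p) - 2 * t * (w ⬝ᵥ (u - p)) + t ^ 2 * (w ⬝ᵥ w) := fun u => by
    rw [sub_add_eq_sub_sub]
    simp only [sub_dotProduct, dotProduct_sub, smul_dotProduct, dotProduct_smul, smul_eq_mul,
      dotProduct_comm (u - p) w]
    ring
  refine isProx_of_quadratic_growth (C := 1 / 2 * t ^ 2 * (w ⬝ᵥ w) + t * c) ?_ fun u => ?_
  · simp only [proxCost, smulF, Matrix.one_mulVec, hp, hsq, sub_self, dotProduct_zero]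
    norm_cast
    ring_nf
  · have hwu := hw u
    simp only [proxCost, smulF, Matrix.one_mulVec, hsq] at hwu ⊢
    generalize φ u = r at hwu ⊢
    induction r using EReal.rec with
    | bot => exact absurd (le_bot_iff.1 hwu) (EReal.coe_ne_bot _)
    | top => rw [EReal.mul_top_of_pos (mod_cast ht), EReal.coe_add_top]; exact le_top
    | coe r =>
      rw [EReal.coe_le_coe_iff] at hwu
      norm_cast
      nlinarith [mul_le_mul_of_nonneg_left hwu ht.le]

end Prox

theorem EReal.coe_finset_sum {ι : Type*} (t : Finset ι) (r : ι → ℝ) :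
    ((∑ i ∈ t, r i : ℝ) : EReal) = ∑ i ∈ t, (r i : EReal) :=
  map_sum (⟨⟨((↑) : ℝ → EReal), EReal.coe_zero⟩, EReal.coe_add⟩ : ℝ →+ EReal) r t

theorem EReal.sum_ne_bot {ι : Type*} {t : Finset ι} {g : ι → EReal} (h : ∀ i ∈ t, g i ≠ ⊥) :
    ∑ i ∈ t, g i ≠ ⊥ := by
  classical
  induction t using Finset.induction_on with
  | empty => simp
  | insert a t ha ih =>
    simp only [Finset.mem_insert, forall_eq_or_imp] at h
    rw [Finset.sum_insert ha, Ne, EReal.add_eq_bot_iff, not_or]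
    exact ⟨h.1, ih h.2⟩

theorem EReal.sum_ne_top_iff {ι : Type*} {t : Finset ι} {g : ι → EReal}
    (h : ∀ i ∈ t, g i ≠ ⊥) : ∑ i ∈ t, g i ≠ ⊤ ↔ ∀ i ∈ t, g i ≠ ⊤ := by
  classical
  induction t using Finset.induction_on with
  | empty => simp
  | insert a t ha ih =>
    simp only [Finset.mem_insert, forall_eq_or_imp] at h ⊢
    rw [Finset.sum_insert ha, EReal.add_ne_top_iff_ne_top₂ h.1 (EReal.sum_ne_bot h.2), ih h.2]

theorem Fintype.sum_apply_update_sub_sum {ι M : Type*} [Fintype ι] [DecidableEq ι]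
    [AddCommGroup M] {β : ι → Type*} (F : ∀ i, β i → M) (X : ∀ i, β i) (i : ι) (v : β i) :
    ∑ j, F j (Function.update X i v j) - ∑ j, F j (X j) = F i v - F i (X i) := by
  rw [← Finset.sum_sub_distrib, Finset.sum_eq_single i
    (fun j _ hj => by rw [Function.update_of_ne hj, sub_self]) (by simp), Function.update_self]

theorem ProperConvexLsc.ne_bot {ι : Type*} [Fintype ι] {f : (ι → ℝ) → EReal}
    (hf : ProperConvexLsc f) (u : ι → ℝ) : f u ≠ ⊥ :=
  hf.2.1 u

theorem ProperConvexLsc.convexOn_toReal {ι : Type*} [Fintype ι] {f : (ι → ℝ) → EReal}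
    (hf : ProperConvexLsc f) : ConvexOn ℝ {u | f u ≠ ⊤} fun u => (f u).toReal := by
  have hcomb : ∀ u, f u ≠ ⊤ → ∀ v, f v ≠ ⊤ → ∀ a : ℝ, 0 < a → a < 1 →
      f (a • u + (1 - a) • v) ≤ ((a * (f u).toReal + (1 - a) * (f v).toReal : ℝ) : EReal) := by
    intro u hu v hv a ha ha1
    have := hf.2.2.2 u v a ha ha1
    rwa [← EReal.coe_toReal hu (hf.ne_bot u), ← EReal.coe_toReal hv (hf.ne_bot v), ← EReal.coe_mul,
      ← EReal.coe_mul, ← EReal.coe_add] at this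
  refine convexOn_iff_forall_pos.2 ⟨convex_iff_forall_pos.2 ?_, ?_⟩ <;>
    intro u hu v hv a c ha hc hac <;> obtain rfl : c = 1 - a := by linarith
  · exact ne_top_of_le_ne_top (EReal.coe_ne_top _) (hcomb u hu v hv a ha (by linarith))
  · simpa only [smul_eq_mul, EReal.toReal_coe] using EReal.toReal_le_toReal
      (hcomb u hu v hv a ha (by linarith)) (hf.ne_bot _) (EReal.coe_ne_top _)

section Problem

variable {f : ∀ i : Fin s, (Fin (n i) → ℝ) → EReal}
  {A : ∀ i : Fin s, Matrix (Fin m) (Fin (n i)) ℝ} {b : Fin m → ℝ} {x : XIdx n → ℝ}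

def sumAxLinearMap (A : ∀ i : Fin s, Matrix (Fin m) (Fin (n i)) ℝ) :
    (XIdx n → ℝ) →ₗ[ℝ] (Fin m → ℝ) where
  toFun := sumAx A
  map_add' u v := by
    simp only [sumAx, ← Finset.sum_add_distrib, ← mulVec_add]
    rfl
  map_smul' c u := by
    simp only [sumAx, Finset.smul_sum, ← mulVec_smul]
    rfl

theorem objSum_ne_top_iff (hf : ∀ i u, f i u ≠ ⊥) :
    objSum f x ≠ ⊤ ↔ ∀ i, f i (blk x i) ≠ ⊤ := by
  simpa [objSum] using EReal.sum_ne_top_iff (t := Finset.univ) fun i _ => hf i (blk x i)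

theorem objSum_eq_coe (hf : ∀ i u, f i u ≠ ⊥) (hx : ∀ i, f i (blk x i) ≠ ⊤) :
    objSum f x = ((∑ i, (f i (blk x i)).toReal : ℝ) : EReal) := by
  rw [EReal.coe_finset_sum]
  exact Finset.sum_congr rfl fun i _ => (EReal.coe_toReal (hx i) (hf i _)).symm

theorem convexOn_sum_toReal (hf : ∀ i, ProperConvexLsc (f i)) :
    ConvexOn ℝ {u : XIdx n → ℝ | ∀ i, f i (blk u i) ≠ ⊤}
      fun u => ∑ i, (f i (blk u i)).toReal := by
  have hfi := fun i => (hf i).convexOn_toReal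
  refine ⟨fun u hu v hv a c ha hc hac i => (hfi i).1 (hu i) (hv i) ha hc hac, ?_⟩
  intro u hu v hv a c ha hc hac
  calc ∑ i, (f i (blk (a • u + c • v) i)).toReal
      ≤ ∑ i, (a * (f i (blk u i)).toReal + c * (f i (blk v i)).toReal) :=
        Finset.sum_le_sum fun i _ => (hfi i).2 (hu i) (hv i) ha hc hac
    _ = a * ∑ i, (f i (blk u i)).toReal + c * ∑ i, (f i (blk v i)).toReal := by
        rw [Finset.sum_add_distrib, Finset.mul_sum, Finset.mul_sum]

theorem IsSolution.exists_multiplier (hf : ∀ i, ProperConvexLsc (f i)) (hb : RiCond f A b)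
    (hx : IsSolution f A b x) :
    ∃ y : Fin m → ℝ, (∀ i, f i (blk x i) ≠ ⊤) ∧ ∀ u : XIdx n → ℝ, (∀ i, f i (blk u i) ≠ ⊤) →
      ∑ i, (f i (blk x i)).toReal ≤ ∑ i, (f i (blk u i)).toReal + y ⬝ᵥ (sumAx A u - b) := by
  have hbot : ∀ i u, f i u ≠ ⊥ := fun i => (hf i).ne_bot
  have hdom : {u | objSum f u ≠ ⊤} = {u | ∀ i, f i (blk u i) ≠ ⊤} :=
    Set.ext fun u => objSum_ne_top_iff hbot
  rw [RiCond, hdom] at hb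
  obtain ⟨x₀, hx₀, hAx₀⟩ := hb
  have hxD : ∀ i, f i (blk x i) ≠ ⊤ := (objSum_ne_top_iff hbot).1 <| ne_top_of_le_ne_top
    ((objSum_ne_top_iff hbot).2 (intrinsicInterior_subset hx₀)) (hx.2 x₀ hAx₀)
  obtain ⟨φ, hφ⟩ := (convexOn_sum_toReal hf).exists_lagrange_multiplier (sumAxLinearMap A)
    ⟨x₀, hx₀, hAx₀⟩ hxD hx.1 fun u hu hAu => by
      simpa [objSum_eq_coe hbot hxD, objSum_eq_coe hbot hu] using hx.2 u hAu
  obtain ⟨y, hy⟩ := (dotProductEquiv ℝ (Fin m)).surjective φ.toLinearMap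
  have hyφ : ∀ z, φ z = y ⬝ᵥ z := fun z => (LinearMap.congr_fun hy z).symm
  refine ⟨y, hxD, fun u hu => ?_⟩
  have := hφ u hu
  rwa [hyφ] at this

theorem IsSolution.exists_subgradient (hf : ∀ i, ProperConvexLsc (f i)) (hb : RiCond f A b)
    (hx : IsSolution f A b x) :
    ∃ y : Fin m → ℝ, (∀ i, f i (blk x i) ≠ ⊤) ∧ ∀ i v,
      (((f i (blk x i)).toReal + -((A i)ᵀ *ᵥ y) ⬝ᵥ (v - blk x i) : ℝ) : EReal) ≤ f i v := by
  obtain ⟨y, hxD, hy⟩ := hx.exists_multiplier hf hb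
  refine ⟨y, hxD, fun i v => ?_⟩
  rcases eq_or_ne (f i v) ⊤ with hv | hv
  · exact hv ▸ le_top
  set u : XIdx n → ℝ := Sigma.uncurry (Function.update (blk x) i v)
  have hblk : blk u = Function.update (blk x) i v := rfl
  have huD : ∀ j, f j (blk u j) ≠ ⊤ := fun j => by
    rcases eq_or_ne j i with rfl | hj
    · simpa [hblk] using hv
    · simpa [hblk, Function.update_of_ne hj] using hxD j
  have hval := Fintype.sum_apply_update_sub_sum (fun j w => (f j w).toReal) (blk x) i v
  have hA := Fintype.sum_apply_update_sub_sum (fun j w => A j *ᵥ w) (blk x) i v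
  have key := hy u huD
  rw [← hx.1] at key
  simp only [sumAx, hblk] at key
  rw [hA, ← mulVec_sub, dotProduct_mulVec, ← mulVec_transpose] at key
  rw [← EReal.coe_toReal hv ((hf i).ne_bot v), EReal.coe_le_coe_iff, neg_dotProduct]
  linarith

end Problem

/-- If `x` solves (P) and `b ∈ A(ri(dom ∑ f_i))`, then for all `β > 0` and
`α_i > 0` there is `y` with `x_i = prox_{(α_i/β)f_i}(x_i − (α_i/β)A_iᵀy)` for all `i` and
`y = prox_{β ι_C*}(y + β ∑ A_i x_i)`. -/
theorem solution_implies_fixed_point {s m : ℕ} {n : Fin s → ℕ}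
    (f : ∀ i : Fin s, (Fin (n i) → ℝ) → EReal)
    (A : ∀ i : Fin s, Matrix (Fin m) (Fin (n i)) ℝ) (b : Fin m → ℝ)
    (hf : ∀ i, ProperConvexLsc (f i))
    (hb : RiCond f A b)
    (x : XIdx n → ℝ) (hx : IsSolution f A b x) :
    ∀ β : ℝ, 0 < β → ∀ α : Fin s → ℝ, (∀ i, 0 < α i) →
      ∃ y : Fin m → ℝ,
        (∀ i, IsProx (smulF (α i / β) (f i)) 1
          (blk x i - (α i / β) • (A i)ᵀ.mulVec y) (blk x i)) ∧
        IsProx (smulF β (iotaCstar b)) 1 (y + β • sumAx A x) y := by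
  intro β hβ α hα
  obtain ⟨y, hxD, hsub⟩ := hx.exists_subgradient hf hb
  refine ⟨y, fun i => ?_, ?_⟩
  · have := isProx_add_smul_of_subgradient (div_pos (hα i) hβ)
      (EReal.coe_toReal (hxD i) ((hf i).ne_bot _)).symm (hsub i)
    rwa [smul_neg, ← sub_eq_add_neg] at this
  · rw [hx.1]
    refine isProx_add_smul_of_subgradient hβ rfl fun v => le_of_eq ?_
    simp only [iotaCstar, dotProduct_comm b, sub_dotProduct, add_sub_cancel]
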